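/- Let $\Delta \in \mathbb{C}^{m\times m}$ with $\sum_{j=1}^m |\Delta_{j,i}| < 1$ for every column $i$ (i.e., the column sums of moduli are each less than 1). Then there exists $\rho_0 > 0$ such that for all diagonal $\rho = \mathrm{diag}(\rho_1,\dots,\rho_m)$ with $0 < \rho_i < \rho_0$ for each $i$, the spectral radius of $G = (I-\rho) - \Delta\rho$ is less than 1. In fact any $0 < \rho_i \le 1$ suffices. -/

import Mathlib

/-!
By the column form of Geršgorin's theorem, every eigenvalue `μ` of a matrix `A` satisfies
`‖μ‖ ≤ ∑ j, ‖A j k‖` for some column `k`. For `G = (1 - ρ) - Δ ρ` the `k`-th column sum of moduli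
is at most `(1 - ρₖ) + ρₖ ∑ j, ‖Δ j k‖`, which is `< 1` as soon as `0 < ρₖ ≤ 1`, because
`∑ j, ‖Δ j k‖ < 1`.
-/

open Matrix Finset

section ColumnGershgorin

variable {K n : Type*} [NormedField K] [Fintype n] [DecidableEq n]

theorem Matrix.exists_norm_sub_diag_le_col_sum_of_mem_spectrum {A : Matrix n n K} {μ : K}
    (hμ : μ ∈ spectrum K A) : ∃ k, ‖μ - A k k‖ ≤ ∑ j ∈ univ.erase k, ‖A j k‖ := by
  by_contra! h
  refine hμ ((isUnit_iff_isUnit_det _).2 (isUnit_iff_ne_zero.2 ?_))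
  refine det_ne_zero_of_sum_col_lt_diag fun k => ?_
  refine (sum_congr rfl fun j hj => ?_).trans_lt ((h k).trans_eq ?_)
  · simp [algebraMap_matrix_apply, (mem_erase.1 hj).1]
  · simp [algebraMap_matrix_apply]

theorem Matrix.norm_lt_of_mem_spectrum_of_col_sum_lt {A : Matrix n n K} {r : ℝ}
    (hA : ∀ k, ∑ j, ‖A j k‖ < r) {μ : K} (hμ : μ ∈ spectrum K A) : ‖μ‖ < r := by
  obtain ⟨k, hk⟩ := exists_norm_sub_diag_le_col_sum_of_mem_spectrum hμ
  calc ‖μ‖ ≤ ‖μ - A k k‖ + ‖A k k‖ := norm_le_norm_sub_add μ (A k k)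
    _ ≤ ∑ j ∈ univ.erase k, ‖A j k‖ + ‖A k k‖ := by gcongr
    _ = ∑ j, ‖A j k‖ := sum_erase_add _ _ (mem_univ k)
    _ < r := hA k

theorem Matrix.col_sum_norm_one_sub_diagonal_sub_mul_diagonal_le (Δ : Matrix n n K)
    (ρ : n → K) (k : n) :
    ∑ j, ‖((1 - diagonal ρ) - Δ * diagonal ρ) j k‖ ≤ ‖1 - ρ k‖ + ‖ρ k‖ * ∑ j, ‖Δ j k‖ := by
  calc ∑ j, ‖((1 - diagonal ρ) - Δ * diagonal ρ) j k‖
      ≤ ∑ j, (‖(1 - diagonal ρ) j k‖ + ‖ρ k‖ * ‖Δ j k‖) := by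
        gcongr with j
        simpa [norm_mul, mul_comm] using norm_sub_le ((1 - diagonal ρ) j k) (Δ j k * ρ k)
    _ = ‖1 - ρ k‖ + ‖ρ k‖ * ∑ j, ‖Δ j k‖ := by
        rw [sum_add_distrib, mul_sum, sum_eq_single k]
        · simp
        · intro j _ hjk
          simp [hjk]
        · simp

end ColumnGershgorin

theorem norm_lt_one_of_mem_spectrum_one_sub_diagonal_sub_mul_diagonal {n : Type*} [Fintype n]
    [DecidableEq n] {Δ : Matrix n n ℂ} (hΔ : ∀ i, ∑ j, ‖Δ j i‖ < 1) {ρ : n → ℝ}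
    (hρ : ∀ i, 0 < ρ i ∧ ρ i ≤ 1) {μ : ℂ}
    (hμ : μ ∈ spectrum ℂ ((1 - diagonal (fun i => (ρ i : ℂ))) -
      Δ * diagonal (fun i => (ρ i : ℂ)))) : ‖μ‖ < 1 := by
  refine norm_lt_of_mem_spectrum_of_col_sum_lt (fun k => ?_) hμ
  obtain ⟨hρ_pos, hρ_le_one⟩ := hρ k
  have h_one_sub : ‖1 - (ρ k : ℂ)‖ = 1 - ρ k := by
    rw [← Complex.ofReal_one, ← Complex.ofReal_sub, Complex.norm_real,
      Real.norm_of_nonneg (sub_nonneg.2 hρ_le_one)]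
  calc _ ≤ ‖1 - (ρ k : ℂ)‖ + ‖(ρ k : ℂ)‖ * ∑ j, ‖Δ j k‖ :=
        col_sum_norm_one_sub_diagonal_sub_mul_diagonal_le Δ _ k
    _ = 1 - ρ k + ρ k * ∑ j, ‖Δ j k‖ := by
        rw [h_one_sub, Complex.norm_real, Real.norm_of_nonneg hρ_pos.le]
    _ < 1 := by linarith [mul_lt_of_lt_one_right hρ_pos (hΔ k)]

theorem ilc_small_gain_convergence (m : ℕ)
    (Δ : Matrix (Fin m) (Fin m) ℂ)
    (h : ∀ i, ∑ j, ‖Δ j i‖ < 1) :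
    (∃ ρ₀ > (0 : ℝ), ∀ ρ : Fin m → ℝ, (∀ i, 0 < ρ i ∧ ρ i < ρ₀) →
      ∀ μ ∈ spectrum ℂ
          ((1 - Matrix.diagonal (fun i => (ρ i : ℂ))) -
            Δ * Matrix.diagonal (fun i => (ρ i : ℂ))),
        ‖μ‖ < 1) ∧
    (∀ ρ : Fin m → ℝ, (∀ i, 0 < ρ i ∧ ρ i ≤ 1) →
      ∀ μ ∈ spectrum ℂ
          ((1 - Matrix.diagonal (fun i => (ρ i : ℂ))) -
            Δ * Matrix.diagonal (fun i => (ρ i : ℂ))),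
        ‖μ‖ < 1) :=
  ⟨⟨1, one_pos, fun _ hρ _ =>
      norm_lt_one_of_mem_spectrum_one_sub_diagonal_sub_mul_diagonal h
        fun i => ⟨(hρ i).1, (hρ i).2.le⟩⟩,
    fun _ hρ _ => norm_lt_one_of_mem_spectrum_one_sub_diagonal_sub_mul_diagonal h hρ⟩
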